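/- arXiv:2505.14602 — 2 statements merged into one kernel-verified Lean document; each statement's English description precedes it below -/
import Mathlib

section
/- In the Extended Lamplighter group E, the normal closure N of a is an abelian normal subgroup of exponent 2, and every element of N is a product of conjugates of a. -/
inductive Gen3 : Type | a | x | t

def Ae : FreeGroup Gen3 := FreeGroup.of Gen3.a
def Xe : FreeGroup Gen3 := FreeGroup.of Gen3.x
def Te : FreeGroup Gen3 := FreeGroup.of Gen3.t

open scoped commutatorElement

/-- Relators of the Extended Lamplighter group
E = ⟨x, a, t | a² = 1, [x,t] = 1, t⁻¹at = x⁻¹axa⟩. -/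
def extRels : Set (FreeGroup Gen3) :=
  {Ae * Ae, ⁅Xe, Te⁆, (Te⁻¹ * Ae * Te) * (Xe⁻¹ * Ae * Xe * Ae)⁻¹}

abbrev E := PresentedGroup extRels

def toE : FreeGroup Gen3 →* E := QuotientGroup.mk' (Subgroup.normalClosure extRels)

namespace ELamp

def A : E := toE Ae
def X : E := toE Xe
def T : E := toE Te

lemma rel_eq_one {r : FreeGroup Gen3} (h : r ∈ extRels) : toE r = 1 :=
  (QuotientGroup.eq_one_iff r).mpr (Subgroup.subset_normalClosure h)

lemma hAA : A * A = 1 := by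
  have h := rel_eq_one (show Ae * Ae ∈ extRels by simp [extRels])
  simpa [A, map_mul] using h

lemma A_inv : A⁻¹ = A := inv_eq_of_mul_eq_one_right hAA

lemma commXT : Commute X T := by
  have h := rel_eq_one (show ⁅Xe, Te⁆ ∈ extRels by simp [extRels])
  rw [map_commutatorElement] at h
  exact commutatorElement_eq_one_iff_commute.mp h

lemma hTAT : T⁻¹ * A * T = X⁻¹ * A * X * A := by
  have h := rel_eq_one
    (show (Te⁻¹ * Ae * Te) * (Xe⁻¹ * Ae * Xe * Ae)⁻¹ ∈ extRels by simp [extRels])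
  simp only [map_mul, map_inv] at h
  have := mul_eq_one_iff_eq_inv.mp h
  rwa [inv_inv] at this

/-- The shifted copies of `a` : `a_k = x^{-k} a x^k`. -/
def ak (k : ℤ) : E := X ^ (-k) * A * X ^ k

lemma ak_zero : ak 0 = A := by simp [ak]

lemma ak_sq (k : ℤ) : ak k * ak k = 1 := by
  have : ak k * ak k = X ^ (-k) * (A * A) * X ^ k := by unfold ak; group
  rw [this, hAA]; group

lemma ak_inv (k : ℤ) : (ak k)⁻¹ = ak k := inv_eq_of_mul_eq_one_right (ak_sq k)

lemma commTXz (m : ℤ) : T⁻¹ * X ^ m = X ^ m * T⁻¹ :=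
  ((commXT.zpow_left m).inv_right).symm.eq

lemma T_conj (k : ℤ) : T⁻¹ * ak k * T = ak (k + 1) * ak k := by
  have h1 : T⁻¹ * ak k * T = X ^ (-k) * (T⁻¹ * A * T) * X ^ k := by
    unfold ak
    rw [show T⁻¹ * (X ^ (-k) * A * X ^ k) * T
        = (T⁻¹ * X ^ (-k)) * A * (X ^ k * T) from by group,
      commTXz, (commXT.zpow_left k).eq]
    group
  rw [h1, hTAT]
  unfold ak
  group

lemma comm_step (k : ℤ) : Commute (ak (k + 1)) (ak k) := by
  have h : (ak (k + 1) * ak k) * (ak (k + 1) * ak k) = 1 := by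
    rw [← T_conj]
    have : T⁻¹ * ak k * T * (T⁻¹ * ak k * T) = T⁻¹ * (ak k * ak k) * T := by group
    rw [this, ak_sq]; group
  have hInv : (ak (k + 1) * ak k)⁻¹ = ak (k + 1) * ak k :=
    inv_eq_of_mul_eq_one_right h
  have : ak (k + 1) * ak k = ak k * ak (k + 1) := by
    conv_lhs => rw [← hInv]
    rw [mul_inv_rev, ak_inv, ak_inv]
  exact this

lemma comm_dist : ∀ n : ℕ, ∀ i j : ℤ, j = i + n → Commute (ak i) (ak j) := by
  intro n
  induction n using Nat.strong_induction_on with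
  | _ n IH =>
    match n with
    | 0 => intro i j h; rw [show j = i by omega]
    | 1 =>
      intro i j h
      rw [show j = i + 1 by omega]
      exact (comm_step i).symm
    | (m + 2) =>
      intro i j h
      have hj : j = i + ((m : ℤ) + 2) := by push_cast at h; omega
      subst hj
      set a := ak i with ha
      set b := ak (i + 1) with hb
      set c := ak (i + ((m : ℤ) + 1)) with hc
      set d := ak (i + ((m : ℤ) + 2)) with hd
      have hconj : Commute (b * a) (d * c) := by
        have h1 : Commute a c := IH (m + 1) (by omega) i (i + ((m : ℤ) + 1)) (by push_cast; ring)
        -- conjugate h1 by T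
        have h2 : Commute (T⁻¹ * a * T) (T⁻¹ * c * T) := by
          unfold Commute SemiconjBy
          rw [show T⁻¹ * a * T * (T⁻¹ * c * T) = T⁻¹ * (a * c) * T from by group,
            show T⁻¹ * c * T * (T⁻¹ * a * T) = T⁻¹ * (c * a) * T from by group, h1.eq]
        rw [ha, hc, T_conj, T_conj,
          show i + ((m : ℤ) + 1) + 1 = i + ((m : ℤ) + 2) from by ring] at h2
        exact h2
      have hbc : Commute b c := IH m (by omega) (i + 1) (i + ((m : ℤ) + 1)) (by ring)
      have hbd : Commute b d := IH (m + 1) (by omega) (i + 1) (i + ((m : ℤ) + 2)) (by push_cast; ring)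
      have hac : Commute a c := IH (m + 1) (by omega) i (i + ((m : ℤ) + 1)) (by push_cast; ring)
      show Commute a d
      have key : b * (a * d * c) = b * (d * a * c) := by
        calc b * (a * d * c) = (b * a) * (d * c) := by group
          _ = (d * c) * (b * a) := hconj.eq
          _ = d * (c * b) * a := by group
          _ = d * (b * c) * a := by rw [hbc.eq]
          _ = (d * b) * (c * a) := by group
          _ = (b * d) * (a * c) := by rw [← hbd.eq, ← hac.eq]
          _ = b * (d * a * c) := by group
      have key2 : a * d * c = d * a * c := mul_left_cancel key
      exact mul_right_cancel key2

lemma comm_all (i j : ℤ) : Commute (ak i) (ak j) := by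
  rcases le_total i j with h | h
  · exact comm_dist (j - i).toNat i j (by omega)
  · exact (comm_dist (i - j).toNat j i (by omega)).symm

/-- The subgroup generated by all `a_k`. -/
def M₀ : Subgroup E := Subgroup.closure (Set.range ak)

lemma M₀_comm : ∀ g ∈ M₀, ∀ h ∈ M₀, Commute g h := by
  intro g hg
  refine Subgroup.closure_induction ?_ ?_ ?_ ?_ hg
  · rintro x ⟨i, rfl⟩ h hh
    refine Subgroup.closure_induction ?_ ?_ ?_ ?_ hh
    · rintro y ⟨j, rfl⟩; exact comm_all i j
    · exact Commute.one_right _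
    · intro y z _ _ h1 h2; exact h1.mul_right h2
    · intro y _ h1; exact h1.inv_right
  · intro h hh; exact Commute.one_left _
  · intro x y _ _ h1 h2 h hh; exact (h1 h hh).mul_left (h2 h hh)
  · intro x _ h1 h hh; exact (h1 h hh).inv_left

lemma M₀_sq : ∀ g ∈ M₀, g * g = 1 := by
  intro g hg
  refine Subgroup.closure_induction ?_ ?_ ?_ ?_ hg
  · rintro x ⟨i, rfl⟩; exact ak_sq i
  · simp
  · intro x y hx hy h1 h2
    have hcomm : y * x = x * y := (M₀_comm x hx y hy).eq.symm
    calc x * y * (x * y) = x * (y * x) * y := by group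
      _ = x * (x * y) * y := by rw [hcomm]
      _ = (x * x) * (y * y) := by group
      _ = 1 := by rw [h1, h2, one_mul]
  · intro x _ h1
    rw [← mul_inv_rev, h1, inv_one]

lemma ak_mem (k : ℤ) : ak k ∈ M₀ := Subgroup.subset_closure ⟨k, rfl⟩

lemma conj_M₀ {u : E} (hu : ∀ k : ℤ, u * ak k * u⁻¹ ∈ M₀) :
    ∀ g ∈ M₀, u * g * u⁻¹ ∈ M₀ := by
  intro g hg
  refine Subgroup.closure_induction ?_ ?_ ?_ ?_ hg
  · rintro x ⟨i, rfl⟩; exact hu i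
  · simpa using Subgroup.one_mem M₀
  · intro x y _ _ h1 h2
    rw [show u * (x * y) * u⁻¹ = (u * x * u⁻¹) * (u * y * u⁻¹) from by group]
    exact mul_mem h1 h2
  · intro x _ h1
    rw [show u * x⁻¹ * u⁻¹ = (u * x * u⁻¹)⁻¹ from by group]
    exact inv_mem h1

lemma Tinv_conj_M₀ : ∀ g ∈ M₀, T⁻¹ * g * T ∈ M₀ := by
  have h : ∀ k : ℤ, T⁻¹ * ak k * T⁻¹⁻¹ ∈ M₀ := by
    intro k
    rw [inv_inv, T_conj]
    exact mul_mem (ak_mem _) (ak_mem _)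
  intro g hg
  simpa using conj_M₀ h g hg

lemma Xinv_conj_ak (k : ℤ) : X⁻¹ * ak k * X = ak (k + 1) := by
  unfold ak; group

lemma X_conj_ak (k : ℤ) : X * ak k * X⁻¹ = ak (k - 1) := by
  unfold ak; group

lemma X_conj_M₀ : ∀ g ∈ M₀, X * g * X⁻¹ ∈ M₀ :=
  conj_M₀ (fun k => by rw [X_conj_ak]; exact ak_mem _)

lemma Xinv_conj_M₀ : ∀ g ∈ M₀, X⁻¹ * g * X ∈ M₀ := by
  intro g hg
  have := conj_M₀ (u := X⁻¹) (fun k => by rw [inv_inv, Xinv_conj_ak]; exact ak_mem _) g hg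
  simpa using this

/-- `g` lies in `T^p M₀ T^{-p}`. -/
def inM (p : ℕ) (g : E) : Prop := (T ^ p)⁻¹ * g * T ^ p ∈ M₀

lemma inM_mono {p q : ℕ} (h : p ≤ q) {g : E} (hg : inM p g) : inM q g := by
  obtain ⟨d, rfl⟩ := Nat.exists_eq_add_of_le h
  induction d with
  | zero => simpa using hg
  | succ d ih =>
    have hd := ih (by omega)
    unfold inM at hd ⊢
    rw [show (T ^ (p + (d + 1)))⁻¹ * g * T ^ (p + (d + 1))
        = T⁻¹ * ((T ^ (p + d))⁻¹ * g * T ^ (p + d)) * T from by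
      rw [show p + (d + 1) = (p + d) + 1 from rfl, pow_succ]; group]
    exact Tinv_conj_M₀ _ hd

/-- The union `⋃ₚ T^p M₀ T^{-p}`, which will turn out to contain the normal closure of `a`. -/
def Nsub : Subgroup E where
  carrier := {g | ∃ p, inM p g}
  one_mem' := ⟨0, by simp [inM, Subgroup.one_mem]⟩
  mul_mem' := by
    rintro x y ⟨p, hp⟩ ⟨q, hq⟩
    refine ⟨max p q, ?_⟩
    have hx := inM_mono (le_max_left p q) hp
    have hy := inM_mono (le_max_right p q) hq
    unfold inM at hx hy ⊢
    rw [show (T ^ max p q)⁻¹ * (x * y) * T ^ max p q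
        = ((T ^ max p q)⁻¹ * x * T ^ max p q) * ((T ^ max p q)⁻¹ * y * T ^ max p q) from by
      group]
    exact mul_mem hx hy
  inv_mem' := by
    rintro x ⟨p, hp⟩
    refine ⟨p, ?_⟩
    unfold inM at hp ⊢
    rw [show (T ^ p)⁻¹ * x⁻¹ * T ^ p = ((T ^ p)⁻¹ * x * T ^ p)⁻¹ from by group]
    exact inv_mem hp

lemma Nsub_comm {g h : E} (hg : g ∈ Nsub) (hh : h ∈ Nsub) : Commute g h := by
  obtain ⟨p, hp⟩ := hg
  obtain ⟨q, hq⟩ := hh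
  set r := max p q
  have hg' := inM_mono (le_max_left p q) hp
  have hh' := inM_mono (le_max_right p q) hq
  have hc := M₀_comm _ hg' _ hh'
  have key : (T ^ r)⁻¹ * (g * h) * T ^ r = (T ^ r)⁻¹ * (h * g) * T ^ r := by
    calc (T ^ r)⁻¹ * (g * h) * T ^ r
        = ((T ^ r)⁻¹ * g * T ^ r) * ((T ^ r)⁻¹ * h * T ^ r) := by group
      _ = ((T ^ r)⁻¹ * h * T ^ r) * ((T ^ r)⁻¹ * g * T ^ r) := hc.eq
      _ = (T ^ r)⁻¹ * (h * g) * T ^ r := by group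
  exact mul_left_cancel (mul_right_cancel key)

lemma A_mem_M₀ : A ∈ M₀ := ak_zero ▸ ak_mem 0

lemma inM_A (p : ℕ) : inM p A := inM_mono (Nat.zero_le p) (by simpa [inM] using A_mem_M₀)

lemma commXTp (p : ℕ) : (T ^ p)⁻¹ * X = X * (T ^ p)⁻¹ :=
  ((commXT.pow_right p).inv_right).symm.eq

lemma T_mem_conj {g : E} (hg : g ∈ Nsub) : T * g * T⁻¹ ∈ Nsub := by
  obtain ⟨p, hp⟩ := hg
  refine ⟨p + 1, ?_⟩
  unfold inM at hp ⊢
  rw [show (T ^ (p + 1))⁻¹ * (T * g * T⁻¹) * T ^ (p + 1)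
      = (T ^ p)⁻¹ * g * T ^ p from by rw [pow_succ]; group]
  exact hp

lemma Tinv_mem_conj {g : E} (hg : g ∈ Nsub) : T⁻¹ * g * T ∈ Nsub := by
  obtain ⟨p, hp⟩ := hg
  refine ⟨p, ?_⟩
  unfold inM
  rw [show (T ^ p)⁻¹ * (T⁻¹ * g * T) * T ^ p
      = (T ^ (p + 1))⁻¹ * g * T ^ (p + 1) from by rw [pow_succ]; group]
  exact inM_mono (Nat.le_succ p) hp

lemma commXinvTp (p : ℕ) : X⁻¹ * T ^ p = T ^ p * X⁻¹ :=
  ((commXT.pow_right p).inv_left).eq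

lemma commXTp2 (p : ℕ) : (T ^ p)⁻¹ * X⁻¹ = X⁻¹ * (T ^ p)⁻¹ :=
  ((commXT.pow_right p).inv_right.inv_left).symm.eq

lemma X_mem_conj {g : E} (hg : g ∈ Nsub) : X * g * X⁻¹ ∈ Nsub := by
  obtain ⟨p, hp⟩ := hg
  refine ⟨p, ?_⟩
  unfold inM at hp ⊢
  rw [show (T ^ p)⁻¹ * (X * g * X⁻¹) * T ^ p
      = ((T ^ p)⁻¹ * X) * g * (X⁻¹ * T ^ p) from by group, commXTp, commXinvTp,
    show X * (T ^ p)⁻¹ * g * (T ^ p * X⁻¹)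
      = X * ((T ^ p)⁻¹ * g * T ^ p) * X⁻¹ from by group]
  exact X_conj_M₀ _ hp

lemma Xinv_mem_conj {g : E} (hg : g ∈ Nsub) : X⁻¹ * g * X ∈ Nsub := by
  obtain ⟨p, hp⟩ := hg
  refine ⟨p, ?_⟩
  unfold inM at hp ⊢
  rw [show (T ^ p)⁻¹ * (X⁻¹ * g * X) * T ^ p
      = ((T ^ p)⁻¹ * X⁻¹) * g * (X * T ^ p) from by group, commXTp2,
    show X * T ^ p = T ^ p * X from ((commXT.pow_right p).eq),
    show X⁻¹ * (T ^ p)⁻¹ * g * (T ^ p * X)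
      = X⁻¹ * ((T ^ p)⁻¹ * g * T ^ p) * X from by group]
  exact Xinv_conj_M₀ _ hp

lemma A_mem_conj {g : E} (hg : g ∈ Nsub) : A * g * A⁻¹ ∈ Nsub := by
  obtain ⟨p, hp⟩ := hg
  refine ⟨p, ?_⟩
  unfold inM at hp ⊢
  have hA1 : (T ^ p)⁻¹ * A * T ^ p ∈ M₀ := inM_A p
  rw [show (T ^ p)⁻¹ * (A * g * A⁻¹) * T ^ p
      = ((T ^ p)⁻¹ * A * T ^ p) * ((T ^ p)⁻¹ * g * T ^ p) * ((T ^ p)⁻¹ * A * T ^ p)⁻¹ from by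
    group]
  exact mul_mem (mul_mem hA1 hp) (inv_mem hA1)

lemma closure_ATX : Subgroup.closure ({A, X, T} : Set E) = ⊤ := by
  rw [eq_top_iff, ← PresentedGroup.closure_range_of extRels]
  apply Subgroup.closure_mono
  rintro _ ⟨g, rfl⟩
  cases g
  · exact Or.inl rfl
  · exact Or.inr (Or.inl rfl)
  · exact Or.inr (Or.inr rfl)

lemma Nsub_normal : Nsub.Normal := by
  rw [← Subgroup.normalizer_eq_top_iff, eq_top_iff, ← closure_ATX, Subgroup.closure_le]
  rintro u (rfl | rfl | rfl) <;> simp only [SetLike.mem_coe, Subgroup.mem_normalizer_iff] <;>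
    intro h <;> constructor <;> intro hh
  · exact A_mem_conj hh
  · have := A_mem_conj hh
    rw [show A * (A * h * A⁻¹) * A⁻¹ = (A * A) * h * ((A * A))⁻¹ from by group, hAA] at this
    simpa using this
  · exact X_mem_conj hh
  · have := Xinv_mem_conj hh
    rw [show X⁻¹ * (X * h * X⁻¹) * X = h from by group] at this
    exact this
  · exact T_mem_conj hh
  · have := Tinv_mem_conj hh
    rw [show T⁻¹ * (T * h * T⁻¹) * T = h from by group] at this
    exact this

lemma A_mem_Nsub : A ∈ Nsub := ⟨0, by simpa [inM] using A_mem_M₀⟩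

lemma N_le_Nsub : Subgroup.normalClosure {A} ≤ Nsub := by
  haveI := Nsub_normal
  exact Subgroup.normalClosure_le_normal (by rintro x rfl; exact A_mem_Nsub)

end ELamp

open ELamp in
/-- The normal closure N of a in E is an abelian normal subgroup of exponent 2, and
every element of N is a product of conjugates of a. -/
theorem normal_closure_elementary_abelian :
    let N : Subgroup E := Subgroup.normalClosure {toE Ae}
    N.Normal ∧
    (∀ g ∈ N, ∀ h ∈ N, Commute g h) ∧
    (∀ g ∈ N, g ^ 2 = 1) ∧
    (∀ g ∈ N, ∃ l : List E, (∀ z ∈ l, ∃ c : E, z = c * toE Ae * c⁻¹) ∧ g = l.prod) := by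
  intro N
  have hNA : N = Subgroup.normalClosure {A} := rfl
  refine ⟨Subgroup.normalClosure_normal, ?_, ?_, ?_⟩
  · intro g hg h hh
    exact Nsub_comm (N_le_Nsub (hNA ▸ hg)) (N_le_Nsub (hNA ▸ hh))
  · intro g hg
    obtain ⟨p, hp⟩ := N_le_Nsub (hNA ▸ hg)
    have hsq := M₀_sq _ hp
    have key : (T ^ p)⁻¹ * (g * g) * T ^ p = (T ^ p)⁻¹ * 1 * T ^ p := by
      rw [show (T ^ p)⁻¹ * (g * g) * T ^ p
          = ((T ^ p)⁻¹ * g * T ^ p) * ((T ^ p)⁻¹ * g * T ^ p) from by group, hsq]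
      group
    have h2 : g * g = 1 := by
      have := mul_left_cancel (mul_right_cancel key)
      simpa using this
    rw [pow_two, h2]
  · intro g hg
    have hg' : g ∈ Subgroup.closure (Group.conjugatesOfSet ({toE Ae} : Set E)) := hg
    refine Subgroup.closure_induction ?_ ?_ ?_ ?_ hg'
    · intro z hz
      obtain ⟨b, hb, hbz⟩ := Group.mem_conjugatesOfSet_iff.mp hz
      rw [Set.mem_singleton_iff] at hb
      subst hb
      obtain ⟨c, hc⟩ := isConj_iff.mp hbz
      exact ⟨[z], by rintro w hw; simp at hw; subst hw; exact ⟨c, hc.symm⟩, by simp⟩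
    · exact ⟨[], by simp, by simp⟩
    · rintro x y _ _ ⟨l1, hl1, rfl⟩ ⟨l2, hl2, rfl⟩
      refine ⟨l1 ++ l2, ?_, List.prod_append.symm⟩
      intro z hz
      rcases List.mem_append.mp hz with h | h
      · exact hl1 z h
      · exact hl2 z h
    · rintro x _ ⟨l, hl, rfl⟩
      refine ⟨(l.map (·⁻¹)).reverse, ?_, List.prod_inv_reverse l⟩
      intro z hz
      rw [List.mem_reverse, List.mem_map] at hz
      obtain ⟨w, hw, rfl⟩ := hz
      obtain ⟨c, rfl⟩ := hl w hw
      refine ⟨c, ?_⟩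
      rw [mul_inv_rev, mul_inv_rev, inv_inv, show (toE Ae)⁻¹ = A⁻¹ from rfl, A_inv,
        ← mul_assoc]
      rfl
end

section
/- Let L₁ be the finitely presented group ⟨a, x | a², (a·x⁻¹ax)², …, (a·x⁻⁽ⁿ⁻¹⁾axⁿ⁻¹)²⟩. Then the natural surjection L₁ → L onto the Lamplighter group has nontrivial kernel; in particular [a, x⁻ⁿaxⁿ] is nontrivial in L₁ but trivial in L. -/
open scoped commutatorElement

inductive Gen : Type | a | x

def A : FreeGroup Gen := FreeGroup.of Gen.a
def X : FreeGroup Gen := FreeGroup.of Gen.x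

def lampRels : Set (FreeGroup Gen) :=
  {w | w = A * A ∨ ∃ k : ℤ, w = ⁅A, X ^ (-k) * A * X ^ k⁆}

abbrev L := PresentedGroup lampRels

def toL : FreeGroup Gen →* L := QuotientGroup.mk' (Subgroup.normalClosure lampRels)
/-- The truncated-relator set for L₁. -/
def truncRels (n : ℕ) : Set (FreeGroup Gen) :=
  {r | r = A * A ∨ ∃ k : ℕ, 1 ≤ k ∧ k < n ∧
    r = (A * (X ^ (-(k : ℤ)) * A * X ^ (k : ℤ))) ^ 2}

/-- Witness homomorphism to permutations of ℤ: `a ↦ swap 0 n`, `x ↦ (+1)`. -/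
def phi (n : ℤ) : FreeGroup Gen →* Equiv.Perm ℤ :=
  FreeGroup.lift (fun g => match g with
    | Gen.a => Equiv.swap 0 n
    | Gen.x => Equiv.addRight 1)

lemma phi_A (n : ℤ) : phi n A = Equiv.swap 0 n := by simp [phi, A]

lemma phi_X_zpow (n m : ℤ) : phi n (X ^ m) = Equiv.addRight m := by
  simp [phi, X, map_zpow]

lemma phi_conj (n k : ℤ) :
    phi n (X ^ (-k) * A * X ^ k) = Equiv.swap (-k) (n - k) := by
  ext y
  simp [map_mul, phi_A, phi_X_zpow, Equiv.swap_apply_def]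
  split_ifs <;> omega

lemma phi_rels (n : ℕ) (hn : 1 ≤ n) : truncRels n ⊆ (phi n).ker := by
  rintro r (rfl | ⟨k, hk1, hkn, rfl⟩)
  · show phi (n : ℤ) (A * A) = 1
    rw [map_mul, phi_A, Equiv.swap_mul_self]
  · show phi (n : ℤ) ((A * (X ^ (-(k : ℤ)) * A * X ^ (k : ℤ))) ^ 2) = 1
    rw [map_pow, map_mul, phi_A, phi_conj]
    have hd : (Equiv.swap (0 : ℤ) n).Disjoint (Equiv.swap (-(k : ℤ)) ((n : ℤ) - k)) := by
      intro y
      by_cases h1 : y = 0 ∨ y = (n : ℤ)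
      · right
        exact Equiv.swap_apply_of_ne_of_ne (by omega) (by omega)
      · left
        push_neg at h1
        exact Equiv.swap_apply_of_ne_of_ne h1.1 h1.2
    rw [pow_two, mul_assoc, ← mul_assoc (Equiv.swap (-(k : ℤ)) ((n : ℤ) - k)),
      ← hd.commute.eq, mul_assoc, Equiv.swap_mul_self, mul_one, Equiv.swap_mul_self]

lemma phi_comm_ne (n : ℕ) (hn : 1 ≤ n) :
    phi n ⁅A, X ^ (-(n : ℤ)) * A * X ^ (n : ℤ)⁆ ≠ 1 := by
  intro h
  rw [commutatorElement_def, map_mul, map_mul, map_mul, map_inv, map_inv,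
    phi_A, phi_conj] at h
  have := congrArg (fun σ : Equiv.Perm ℤ => σ (n : ℤ)) h
  rw [show (n : ℤ) - n = 0 by ring] at this
  simp only [Equiv.Perm.mul_apply, Equiv.swap_inv, Equiv.swap_apply_def,
    Equiv.Perm.one_apply] at this
  split_ifs at this <;> omega

lemma toL_eq_one {w : FreeGroup Gen} (h : w ∈ lampRels) : toL w = 1 := by
  have : w ∈ Subgroup.normalClosure lampRels := Subgroup.subset_normalClosure h
  exact (QuotientGroup.eq_one_iff w).mpr this

lemma trunc_le_lamp (n : ℕ) : truncRels n ⊆ toL.ker := by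
  rintro r (rfl | ⟨k, hk1, hkn, rfl⟩)
  · exact toL_eq_one (Or.inl rfl)
  · set c : FreeGroup Gen := X ^ (-(k : ℤ)) * A * X ^ (k : ℤ) with hc
    have hA2 : toL A * toL A = 1 := by
      rw [← map_mul]; exact toL_eq_one (Or.inl rfl)
    have hcomm : ⁅toL A, toL c⁆ = 1 := by
      rw [← map_commutatorElement]; exact toL_eq_one (Or.inr ⟨(k : ℤ), rfl⟩)
    have hAc : toL A * toL c = toL c * toL A :=
      commutatorElement_eq_one_iff_mul_comm.mp hcomm
    have hc2 : toL c * toL c = 1 := by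
      have hcc : c * c = X ^ (-(k : ℤ)) * (A * A) * X ^ (k : ℤ) := by
        rw [hc]; group
      rw [← map_mul, hcc, map_mul, map_mul, map_mul, hA2, mul_one,
        ← map_mul, ← zpow_add]
      simp
    show toL ((A * c) ^ 2) = 1
    rw [map_pow, map_mul, pow_two, mul_assoc, ← mul_assoc (toL c), ← hAc,
      mul_assoc, hc2, mul_one, hA2]

/-- The natural surjection L₁ → L has nontrivial kernel: [a, x⁻ⁿaxⁿ] is nontrivial in
L₁ = ⟨a,x | a², (a·x⁻¹ax)², …, (a·x⁻⁽ⁿ⁻¹⁾axⁿ⁻¹)²⟩ but trivial in L. -/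
theorem truncated_presentation_kernel (n : ℕ) (hn : 1 ≤ n) :
    (∃ f : PresentedGroup (truncRels n) →* L,
      (∀ w : FreeGroup Gen,
        f (QuotientGroup.mk' (Subgroup.normalClosure (truncRels n)) w) = toL w) ∧
      Function.Surjective f ∧ f.ker ≠ ⊥) ∧
    (QuotientGroup.mk' (Subgroup.normalClosure (truncRels n))
        ⁅A, X ^ (-(n : ℤ)) * A * X ^ (n : ℤ)⁆ ≠ 1) ∧
    toL ⁅A, X ^ (-(n : ℤ)) * A * X ^ (n : ℤ)⁆ = 1 := by
  have hNle : Subgroup.normalClosure (truncRels n) ≤ toL.ker :=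
    Subgroup.normalClosure_le_normal (trunc_le_lamp n)
  have hne : (QuotientGroup.mk' (Subgroup.normalClosure (truncRels n))
      ⁅A, X ^ (-(n : ℤ)) * A * X ^ (n : ℤ)⁆ ≠ 1) := by
    intro h
    rw [QuotientGroup.mk'_apply, QuotientGroup.eq_one_iff] at h
    have hle : Subgroup.normalClosure (truncRels n) ≤ (phi n).ker :=
      Subgroup.normalClosure_le_normal (phi_rels n hn)
    exact phi_comm_ne n hn (hle h)
  have htriv : toL ⁅A, X ^ (-(n : ℤ)) * A * X ^ (n : ℤ)⁆ = 1 :=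
    toL_eq_one (Or.inr ⟨(n : ℤ), rfl⟩)
  refine ⟨⟨QuotientGroup.lift _ toL hNle, fun w => rfl, ?_, ?_⟩, hne, htriv⟩
  · intro y
    obtain ⟨w, rfl⟩ := QuotientGroup.mk'_surjective (Subgroup.normalClosure lampRels) y
    exact ⟨QuotientGroup.mk' _ w, rfl⟩
  · intro hbot
    apply hne
    have h1 : (QuotientGroup.lift _ toL hNle)
        (QuotientGroup.mk' (Subgroup.normalClosure (truncRels n))
          ⁅A, X ^ (-(n : ℤ)) * A * X ^ (n : ℤ)⁆) = 1 := htriv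
    have := MonoidHom.mem_ker.2 h1
    erw [hbot, Subgroup.mem_bot] at this
    exact this
end
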